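/- arXiv:1502.03371 — 3 statements merged into one kernel-verified Lean document; each statement's English description precedes it below -/
import Mathlib

section
/- Let p be a prime with p ≡ 3 (mod 4), K = GaloisField p 2, ι : ZMod p →+* K the algebra map, and i : K with i² = -1. Then for all a, b in ZMod p, (ι a + i * ι b)^(p+1) = ι (a² + b²), i.e. the (p+1)-st power of a Gaussian integer over GF(p) equals its quadratic norm a² + b². -/
/-!
Since `p ≡ 3 (mod 4)`, the Frobenius `x ↦ x ^ p` sends `i` to `-i` and fixes the prime field, so it
acts on `a + i b` as conjugation. Hence `(a + i b) ^ (p + 1) = (a - i b) (a + i b) = a² + b²`.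
-/

theorem pow_eq_neg_of_sq_eq_neg_one {R : Type*} [Monoid R] [HasDistribNeg R] {i : R}
    (hi : i ^ 2 = -1) {n : ℕ} (hn : n % 4 = 3) : i ^ n = -i := by
  obtain ⟨k, rfl⟩ : ∃ k, n = 2 * (2 * k + 1) + 1 := ⟨n / 4, by omega⟩
  rw [pow_succ, pow_mul, hi, (odd_two_mul_add_one k).neg_one_pow, neg_one_mul]

section CharP

variable {p : ℕ} [Fact p.Prime] {K : Type*} [CommRing K] [Algebra (ZMod p) K] [CharP K p]

theorem add_mul_algebraMap_pow_char {i : K} (hi : i ^ p = -i) (a b : ZMod p) :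
    (algebraMap (ZMod p) K a + i * algebraMap (ZMod p) K b) ^ p
      = algebraMap (ZMod p) K a - i * algebraMap (ZMod p) K b := by
  simp only [add_pow_char, mul_pow, hi, ← map_pow, ZMod.pow_card, neg_mul, sub_eq_add_neg]

theorem add_mul_algebraMap_pow_char_succ {i : K} (hi : i ^ 2 = -1) (hip : i ^ p = -i)
    (a b : ZMod p) :
    (algebraMap (ZMod p) K a + i * algebraMap (ZMod p) K b) ^ (p + 1)
      = algebraMap (ZMod p) K (a ^ 2 + b ^ 2) := by
  rw [pow_succ, add_mul_algebraMap_pow_char hip, map_add, map_pow, map_pow]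
  linear_combination (-(algebraMap (ZMod p) K b) ^ 2) * hi

end CharP

theorem gaussian_norm_power (p : ℕ) [Fact p.Prime] (hp : p % 4 = 3)
    (i : GaloisField p 2) (hi : i ^ 2 = -1) :
    ∀ a b : ZMod p,
      (algebraMap (ZMod p) (GaloisField p 2) a + i * algebraMap (ZMod p) (GaloisField p 2) b) ^ (p + 1)
        = algebraMap (ZMod p) (GaloisField p 2) (a ^ 2 + b ^ 2) :=
  add_mul_algebraMap_pow_char_succ hi (pow_eq_neg_of_sq_eq_neg_one hi hp)
end

section
/- Let p be a prime with p ≡ 3 (mod 4) and K = GaloisField p 2. Let A and B be subgroups of Kˣ with |A| = (p-1)/2 and |B| = 2(p+1). Then the multiplication map A × B → Kˣ sending (α, β) to αβ is a bijection; in particular every nonzero element of K is uniquely a product of an element of A (a 'modulus') and an element of B (a 'phase'). -/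
/-!
The orders `(p - 1) / 2` and `2 (p + 1)` multiply to `p² - 1 = |Kˣ|`, and they are coprime
because `p ≡ 3 (mod 4)` makes `(p - 1) / 2` odd while `gcd (p - 1, p + 1) = 2`. Subgroups of
coprime orders meet trivially, so `A × B → Kˣ` is injective, hence bijective by counting.
-/

theorem Nat.half_pred_mul_two_mul_succ {n : ℕ} (hn : n % 2 = 1) :
    (n - 1) / 2 * (2 * (n + 1)) = n ^ 2 - 1 := by
  obtain ⟨q, rfl⟩ : ∃ q, n = 2 * q + 1 := ⟨n / 2, by omega⟩
  rw [show (2 * q + 1 - 1) / 2 = q by omega]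
  apply Nat.eq_sub_of_add_eq
  ring

theorem Nat.coprime_half_pred_two_mul_succ {n : ℕ} (hn : n % 4 = 3) :
    Nat.Coprime ((n - 1) / 2) (2 * (n + 1)) := by
  have hodd : Nat.Coprime ((n - 1) / 2) 2 :=
    Nat.coprime_two_right.mpr (Nat.odd_iff.mpr (by omega))
  refine Nat.Coprime.mul_right hodd ?_
  -- `n + 1 = 2 + 2 · ((n - 1) / 2)`, so coprimality with `n + 1` reduces to coprimality with `2`.
  rw [show n + 1 = 2 + (n - 1) / 2 * 2 by omega, Nat.coprime_add_mul_left_right]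
  exact hodd

theorem GaloisField.card_units_two (p : ℕ) [Fact p.Prime] :
    Nat.card (GaloisField p 2)ˣ = p ^ 2 - 1 := by
  rw [Nat.card_units, GaloisField.card p 2 two_ne_zero]

theorem polar_decomposition (p : ℕ) [Fact p.Prime] (hp : p % 4 = 3)
    (A B : Subgroup (GaloisField p 2)ˣ)
    (hA : Nat.card A = (p - 1) / 2) (hB : Nat.card B = 2 * (p + 1)) :
    Function.Bijective (fun x : A × B => (x.1 : (GaloisField p 2)ˣ) * (x.2 : (GaloisField p 2)ˣ)) := by
  have hcard : Nat.card A * Nat.card B = Nat.card (GaloisField p 2)ˣ := by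
    rw [hA, hB, GaloisField.card_units_two, Nat.half_pred_mul_two_mul_succ (by omega)]
  have hcoprime : Nat.Coprime (Nat.card A) (Nat.card B) := by
    rw [hA, hB]
    exact Nat.coprime_half_pred_two_mul_succ hp
  exact Subgroup.isComplement'_of_coprime hcard hcoprime
end

section
/- Let p = 2^n - 1 be a Mersenne prime with n ≥ 3, and K = GaloisField p 2. Then every ζ in Kˣ satisfying ζ^(p+1) = -1 (i.e. every Gaussian integer a + jb over GF(p) with a² + b² ≡ -1 mod p) has multiplicative order exactly 2(p+1) = 2^(n+1), hence is a generator of the supra-unimodular group {ζ ∈ Kˣ : ζ^(2(p+1)) = 1}. -/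
/-! As p + 1 = 2 ^ n, we have ζ ^ 2 ^ n = -1, and -1 ≠ 1 because p is odd; so the order of ζ
divides 2 ^ (n + 1) but not 2 ^ n. -/

theorem orderOf_eq_two_pow_succ_of_pow_eq_neg_one {M : Type*} [Monoid M] [HasDistribNeg M]
    {x : M} {k : ℕ} (h1 : (-1 : M) ≠ 1) (hx : x ^ 2 ^ k = -1) :
    orderOf x = 2 ^ (k + 1) :=
  orderOf_eq_prime_pow (by rwa [hx]) (by rw [pow_succ, pow_mul, hx, neg_one_sq])

theorem mersenne_ne_two (n : ℕ) : mersenne n ≠ 2 := by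
  rcases eq_or_ne n 0 with rfl | hn
  · decide
  · exact fun h => Nat.not_even_iff_odd.mpr (mersenne_odd.mpr hn) (h ▸ even_two)

theorem Units.neg_one_ne_one_of_ringChar_ne_two {R : Type*} [Ring R] [Nontrivial R]
    (hR : ringChar R ≠ 2) : (-1 : Rˣ) ≠ 1 :=
  fun h => Ring.neg_one_ne_one_of_char_ne_two hR (by simpa using congrArg Units.val h)

theorem mersenne_supra_unimodular_generator_general (n : ℕ)
    (p : ℕ) (hp : p = 2 ^ n - 1) [Fact p.Prime]
    (ζ : (GaloisField p 2)ˣ) (hζ : ζ ^ (p + 1) = -1) :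
    orderOf ζ = 2 * (p + 1) := by
  have hp' : p = mersenne n := hp
  have h1 : (-1 : (GaloisField p 2)ˣ) ≠ 1 :=
    Units.neg_one_ne_one_of_ringChar_ne_two (by rw [ringChar.eq _ p, hp']; exact mersenne_ne_two n)
  have hsucc : p + 1 = 2 ^ n := hp' ▸ succ_mersenne n
  rw [hsucc] at hζ ⊢
  rw [← pow_succ']
  exact orderOf_eq_two_pow_succ_of_pow_eq_neg_one h1 hζ

theorem mersenne_supra_unimodular_generator (n : ℕ) (hn : 3 ≤ n)
    (p : ℕ) (hp : p = 2 ^ n - 1) [Fact p.Prime]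
    (ζ : (GaloisField p 2)ˣ) (hζ : ζ ^ (p + 1) = -1) :
    orderOf ζ = 2 * (p + 1) :=
  mersenne_supra_unimodular_generator_general n p hp ζ hζ
end
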